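/- Let h be smooth with ∇h ≠ 0 at a point on a Riemannian n-manifold (n ≥ 2), and suppose Δh = F − |∇h|² for a smooth function F. Then pointwise |Hess h|² ≥ (n/(4(n−1))) |∇|∇h|²|²/|∇h|² + (|∇h|⁴ + ⟨∇|∇h|², ∇h⟩)/(n−1) − (2F/(n−1))(h₁₁ + |∇h|²), where h₁₁ = Hess h(e₁,e₁) with e₁ = ∇h/|∇h|. -/
import Mathlib


open Matrix

/- STATEMENT 19: refined Hessian inequality.  A is the Hessian of h (symmetric), v = ∇h ≠ 0,
tr A = Δh = F − |∇h|².  In Euclidean coordinates ∇|∇h|² = 2A∇h, h₁₁ = ⟨Av,v⟩/|v|²,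
⟨∇|∇h|², ∇h⟩ = 2⟨Av, v⟩.  Then
|A|² ≥ (n/(4(n−1))) |2Av|²/|v|² + (|v|⁴ + ⟨2Av, v⟩)/(n−1) − (2F/(n−1))(h₁₁ + |v|²). -/
set_option maxHeartbeats 1000000 in
theorem stmt_19 {n : ℕ} (hn : 2 ≤ n) (A : Matrix (Fin n) (Fin n) ℝ) (hA : A.IsSymm)
    (v : Fin n → ℝ) (hv : v ≠ 0) (F : ℝ)
    (htr : A.trace = F - ∑ i, v i ^ 2) :
    (n : ℝ) / (4 * ((n : ℝ) - 1)) * (∑ i, (2 * A.mulVec v i) ^ 2) / (∑ i, v i ^ 2)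
      + ((∑ i, v i ^ 2) ^ 2 + ((2 : ℝ) • A.mulVec v) ⬝ᵥ v) / ((n : ℝ) - 1)
      - 2 * F / ((n : ℝ) - 1) * ((v ⬝ᵥ A.mulVec v) / (∑ i, v i ^ 2) + ∑ i, v i ^ 2)
      ≤ ∑ i, ∑ j, A i j ^ 2 := by
  obtain ⟨i0, hi0⟩ := Function.ne_iff.mp hv
  set w : Fin n → ℝ := A.mulVec v with hw'
  set s : ℝ := ∑ i, v i ^ 2 with hs'
  set N : ℝ := ∑ i, ∑ j, A i j ^ 2 with hN'
  have hs : 0 < s := by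
    rw [hs']
    exact Finset.sum_pos' (fun j _ => sq_nonneg _)
      ⟨i0, Finset.mem_univ i0, by
        have h0 : v i0 ≠ 0 := hi0
        positivity⟩
  have hw : ∀ i, w i = ∑ j, A i j * v j := fun i => by
    rw [hw']; simp [Matrix.mulVec, dotProduct]
  have hsym : ∀ i j, A j i = A i j := fun i j => hA.apply i j
  set p : ℝ := ∑ i, w i ^ 2 with hp'
  set α : ℝ := ∑ i, v i * w i with hα'
  set x : Fin n → ℝ := fun i => s * w i - α * v i with hx
  set Q : Fin n → Fin n → ℝ :=
    fun i j => s ^ 2 * A i j - α * v i * v j - (x i * v j + v i * x j) with hQ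
  set M : Fin n → Fin n → ℝ :=
    fun i j => s * (if i = j then (1 : ℝ) else 0) - v i * v j with hM
  -- basic single-sum identities
  have hXV : ∑ i, x i * v i = 0 := by
    calc ∑ i, x i * v i = ∑ i, (s * (v i * w i) - α * v i ^ 2) :=
          Finset.sum_congr rfl fun i _ => by simp only [hx]; ring
      _ = s * (∑ i, v i * w i) - α * (∑ i, v i ^ 2) := by
          rw [Finset.sum_sub_distrib, ← Finset.mul_sum, ← Finset.mul_sum]
      _ = 0 := by rw [← hα', ← hs']; ring
  have hX2 : ∑ i, x i ^ 2 = s ^ 2 * p - s * α ^ 2 := by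
    calc ∑ i, x i ^ 2
        = ∑ i, (s ^ 2 * w i ^ 2 - 2 * s * α * (v i * w i) + α ^ 2 * v i ^ 2) :=
          Finset.sum_congr rfl fun i _ => by simp only [hx]; ring
      _ = s ^ 2 * (∑ i, w i ^ 2) - 2 * s * α * (∑ i, v i * w i)
            + α ^ 2 * (∑ i, v i ^ 2) := by
          rw [Finset.sum_add_distrib, Finset.sum_sub_distrib, ← Finset.mul_sum,
            ← Finset.mul_sum, ← Finset.mul_sum]
      _ = s ^ 2 * p - s * α ^ 2 := by rw [← hp', ← hα', ← hs']; ring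
  have hXW : ∑ i, x i * w i = s * p - α * α := by
    calc ∑ i, x i * w i = ∑ i, (s * w i ^ 2 - α * (v i * w i)) :=
          Finset.sum_congr rfl fun i _ => by simp only [hx]; ring
      _ = s * (∑ i, w i ^ 2) - α * (∑ i, v i * w i) := by
          rw [Finset.sum_sub_distrib, ← Finset.mul_sum, ← Finset.mul_sum]
      _ = s * p - α * α := by rw [← hp', ← hα']
  have hvAx : ∑ i, v i * ∑ j, A i j * x j = s * p - α * α := by
    have swap : ∑ i, v i * ∑ j, A i j * x j = ∑ j, x j * ∑ i, A i j * v i := by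
      simp_rw [Finset.mul_sum]
      rw [Finset.sum_comm]
      exact Finset.sum_congr rfl fun j _ => Finset.sum_congr rfl fun i _ => by ring
    rw [swap]
    calc ∑ j, x j * ∑ i, A i j * v i = ∑ j, x j * w j := by
          refine Finset.sum_congr rfl fun j _ => ?_
          congr 1
          rw [hw j]
          exact Finset.sum_congr rfl fun i _ => by rw [hsym i j]
      _ = s * p - α * α := hXW
  -- Q annihilates v
  have hQrow : ∀ i, ∑ j, Q i j * v j = 0 := by
    intro i
    calc ∑ j, Q i j * v j
        = ∑ j, (s ^ 2 * (A i j * v j) - (α * v i + x i) * v j ^ 2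
            - v i * (x j * v j)) :=
          Finset.sum_congr rfl fun j _ => by simp only [hQ]; ring
      _ = s ^ 2 * (∑ j, A i j * v j) - (α * v i + x i) * (∑ j, v j ^ 2)
            - v i * (∑ j, x j * v j) := by
          rw [Finset.sum_sub_distrib, Finset.sum_sub_distrib, ← Finset.mul_sum,
            ← Finset.mul_sum, ← Finset.mul_sum]
      _ = s ^ 2 * w i - (α * v i + x i) * s - v i * 0 := by
          rw [← hw i, ← hs', hXV]
      _ = 0 := by simp only [hx]; ring
  -- trace of Q
  have htr' : ∑ i, A i i = F - s := by simpa [Matrix.trace, Matrix.diag] using htr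
  have htrQ : ∑ i, Q i i = s ^ 2 * (F - s) - α * s := by
    calc ∑ i, Q i i
        = ∑ i, (s ^ 2 * A i i - α * v i ^ 2 - 2 * (x i * v i)) :=
          Finset.sum_congr rfl fun i _ => by simp only [hQ]; ring
      _ = s ^ 2 * (∑ i, A i i) - α * (∑ i, v i ^ 2) - 2 * (∑ i, x i * v i) := by
          rw [Finset.sum_sub_distrib, Finset.sum_sub_distrib, ← Finset.mul_sum,
            ← Finset.mul_sum, ← Finset.mul_sum]
      _ = s ^ 2 * (F - s) - α * s := by rw [htr', ← hs', hXV]; ring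
  -- |Q|²
  have hrow : ∀ i, ∑ j, Q i j ^ 2
      = s ^ 4 * (∑ j, A i j ^ 2) + (α * v i + x i) ^ 2 * s
        + v i ^ 2 * (s ^ 2 * p - s * α ^ 2)
        - 2 * s ^ 2 * ((α * v i + x i) * w i)
        - 2 * s ^ 2 * (v i * ∑ j, A i j * x j) := by
    intro i
    calc ∑ j, Q i j ^ 2
        = ∑ j, (s ^ 4 * A i j ^ 2 + (α * v i + x i) ^ 2 * v j ^ 2
            + v i ^ 2 * x j ^ 2 - 2 * s ^ 2 * (α * v i + x i) * (A i j * v j)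
            - 2 * s ^ 2 * v i * (A i j * x j)
            + 2 * ((α * v i + x i) * v i) * (x j * v j)) :=
          Finset.sum_congr rfl fun j _ => by simp only [hQ]; ring
      _ = s ^ 4 * (∑ j, A i j ^ 2) + (α * v i + x i) ^ 2 * (∑ j, v j ^ 2)
            + v i ^ 2 * (∑ j, x j ^ 2)
            - 2 * s ^ 2 * (α * v i + x i) * (∑ j, A i j * v j)
            - 2 * s ^ 2 * v i * (∑ j, A i j * x j)
            + 2 * ((α * v i + x i) * v i) * (∑ j, x j * v j) := by
          rw [Finset.sum_add_distrib, Finset.sum_sub_distrib, Finset.sum_sub_distrib,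
            Finset.sum_add_distrib, Finset.sum_add_distrib, ← Finset.mul_sum,
            ← Finset.mul_sum, ← Finset.mul_sum, ← Finset.mul_sum, ← Finset.mul_sum,
            ← Finset.mul_sum]
      _ = _ := by rw [← hs', hX2, ← hw i, hXV]; ring
  have hsum1 : ∑ i, (α * v i + x i) ^ 2 = α ^ 2 * s + (s ^ 2 * p - s * α ^ 2) := by
    calc ∑ i, (α * v i + x i) ^ 2
        = ∑ i, (α ^ 2 * v i ^ 2 + 2 * α * (x i * v i) + x i ^ 2) :=
          Finset.sum_congr rfl fun i _ => by ring
      _ = α ^ 2 * (∑ i, v i ^ 2) + 2 * α * (∑ i, x i * v i) + ∑ i, x i ^ 2 := by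
          rw [Finset.sum_add_distrib, Finset.sum_add_distrib, ← Finset.mul_sum,
            ← Finset.mul_sum]
      _ = _ := by rw [← hs', hXV, hX2]; ring
  have hsum2 : ∑ i, (α * v i + x i) * w i = α * α + (s * p - α * α) := by
    calc ∑ i, (α * v i + x i) * w i
        = ∑ i, (α * (v i * w i) + x i * w i) :=
          Finset.sum_congr rfl fun i _ => by ring
      _ = α * (∑ i, v i * w i) + ∑ i, x i * w i := by
          rw [Finset.sum_add_distrib, ← Finset.mul_sum]
      _ = _ := by rw [← hα', hXW]
  have hQ2 : ∑ i, ∑ j, Q i j ^ 2 = s ^ 2 * (s ^ 2 * N - 2 * s * p + α ^ 2) := by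
    calc ∑ i, ∑ j, Q i j ^ 2
        = ∑ i, (s ^ 4 * (∑ j, A i j ^ 2) + (α * v i + x i) ^ 2 * s
            + v i ^ 2 * (s ^ 2 * p - s * α ^ 2)
            - 2 * s ^ 2 * ((α * v i + x i) * w i)
            - 2 * s ^ 2 * (v i * ∑ j, A i j * x j)) :=
          Finset.sum_congr rfl fun i _ => hrow i
      _ = s ^ 4 * (∑ i, ∑ j, A i j ^ 2) + (∑ i, (α * v i + x i) ^ 2) * s
            + (∑ i, v i ^ 2) * (s ^ 2 * p - s * α ^ 2)
            - 2 * s ^ 2 * (∑ i, (α * v i + x i) * w i)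
            - 2 * s ^ 2 * (∑ i, v i * ∑ j, A i j * x j) := by
          rw [Finset.sum_sub_distrib, Finset.sum_sub_distrib, Finset.sum_add_distrib,
            Finset.sum_add_distrib, ← Finset.mul_sum, ← Finset.mul_sum,
            ← Finset.mul_sum, ← Finset.sum_mul, ← Finset.sum_mul]
      _ = _ := by rw [← hN', ← hs', hsum1, hsum2, hvAx]; ring
  -- ⟨Q, M⟩ = s · tr Q
  have hQMrow : ∀ i, ∑ j, Q i j * M i j = s * Q i i := by
    intro i
    have e : ∀ j, Q i j * M i j
        = s * (if i = j then Q i j else 0) - v i * (Q i j * v j) := by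
      intro j
      simp only [hM]
      split_ifs with h <;> ring
    calc ∑ j, Q i j * M i j
        = ∑ j, (s * (if i = j then Q i j else 0) - v i * (Q i j * v j)) :=
          Finset.sum_congr rfl fun j _ => e j
      _ = s * (∑ j, if i = j then Q i j else 0) - v i * (∑ j, Q i j * v j) := by
          rw [Finset.sum_sub_distrib, ← Finset.mul_sum, ← Finset.mul_sum]
      _ = s * Q i i := by rw [hQrow i, Finset.sum_ite_eq]; simp
  have hQM : ∑ i, ∑ j, Q i j * M i j = s * (s ^ 2 * (F - s) - α * s) := by
    calc ∑ i, ∑ j, Q i j * M i j = ∑ i, s * Q i i :=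
          Finset.sum_congr rfl fun i _ => hQMrow i
      _ = s * ∑ i, Q i i := by rw [← Finset.mul_sum]
      _ = _ := by rw [htrQ]
  -- |M|²
  have hM2row : ∀ i, ∑ j, M i j ^ 2 = s ^ 2 - s * v i ^ 2 := by
    intro i
    have e : ∀ j, M i j ^ 2
        = s ^ 2 * (if i = j then (1 : ℝ) else 0)
          - (2 * s * v i) * (if i = j then v j else 0) + v i ^ 2 * v j ^ 2 := by
      intro j
      simp only [hM]
      split_ifs with h <;> ring
    calc ∑ j, M i j ^ 2
        = ∑ j, (s ^ 2 * (if i = j then (1 : ℝ) else 0)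
            - (2 * s * v i) * (if i = j then v j else 0) + v i ^ 2 * v j ^ 2) :=
          Finset.sum_congr rfl fun j _ => e j
      _ = s ^ 2 * (∑ j, if i = j then (1 : ℝ) else 0)
            - (2 * s * v i) * (∑ j, if i = j then v j else 0)
            + v i ^ 2 * (∑ j, v j ^ 2) := by
          rw [Finset.sum_add_distrib, Finset.sum_sub_distrib, ← Finset.mul_sum,
            ← Finset.mul_sum, ← Finset.mul_sum]
      _ = s ^ 2 - s * v i ^ 2 := by
          rw [Finset.sum_ite_eq, Finset.sum_ite_eq, ← hs']
          simp
          ring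
  have hM2 : ∑ i, ∑ j, M i j ^ 2 = ((n : ℝ) - 1) * s ^ 2 := by
    calc ∑ i, ∑ j, M i j ^ 2 = ∑ i : Fin n, (s ^ 2 - s * v i ^ 2) :=
          Finset.sum_congr rfl fun i _ => hM2row i
      _ = (n : ℝ) * s ^ 2 - s * (∑ i, v i ^ 2) := by
          rw [Finset.sum_sub_distrib, ← Finset.mul_sum, Finset.sum_const,
            Finset.card_univ, Fintype.card_fin, nsmul_eq_mul]
      _ = ((n : ℝ) - 1) * s ^ 2 := by rw [← hs']; ring
  -- Cauchy–Schwarz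
  have hCS := Finset.sum_mul_sq_le_sq_mul_sq Finset.univ
    (fun ij : Fin n × Fin n => Q ij.1 ij.2) (fun ij : Fin n × Fin n => M ij.1 ij.2)
  simp only [Fintype.sum_prod_type] at hCS
  rw [hQM, hQ2, hM2] at hCS
  have hC1 : (s * (F - s) - α) ^ 2
      ≤ ((n : ℝ) - 1) * (s ^ 2 * N - 2 * s * p + α ^ 2) := by
    have h4 : (0 : ℝ) < s ^ 4 := by positivity
    refine le_of_mul_le_mul_left ?_ h4
    calc s ^ 4 * (s * (F - s) - α) ^ 2 = (s * (s ^ 2 * (F - s) - α * s)) ^ 2 := by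
          ring
      _ ≤ s ^ 2 * (s ^ 2 * N - 2 * s * p + α ^ 2) * (((n : ℝ) - 1) * s ^ 2) := hCS
      _ = s ^ 4 * (((n : ℝ) - 1) * (s ^ 2 * N - 2 * s * p + α ^ 2)) := by ring
  have hC2 : α ^ 2 ≤ s * p := by
    have h := Finset.sum_mul_sq_le_sq_mul_sq Finset.univ v w
    calc α ^ 2 = (∑ i, v i * w i) ^ 2 := by rw [← hα']
      _ ≤ (∑ i, v i ^ 2) * (∑ i, w i ^ 2) := h
      _ = s * p := by rw [← hs', ← hp']
  -- final algebra
  clear_value w s N p α x Q M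
  have hn2 : (2 : ℝ) ≤ (n : ℝ) := by exact_mod_cast hn
  have hn1 : (0 : ℝ) < (n : ℝ) - 1 := by linarith
  have hnn2 : (0 : ℝ) ≤ (n : ℝ) - 2 := by linarith
  have final2 : ((n : ℝ) * p + (s ^ 2 + 2 * α) * s - 2 * F * (α + s ^ 2)) * s
      ≤ N * (((n : ℝ) - 1) * s) * s := by
    nlinarith [hC1, hC2, hs, sq_nonneg (s * F),
      mul_nonneg hnn2 (by linarith [hC2] : (0 : ℝ) ≤ s * p - α ^ 2)]
  have final : (n : ℝ) * p + (s ^ 2 + 2 * α) * s - 2 * F * (α + s ^ 2)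
      ≤ N * (((n : ℝ) - 1) * s) := le_of_mul_le_mul_right final2 hs
  -- rewrite the goal
  have h4p : ∑ i, (2 * w i) ^ 2 = 4 * p := by
    rw [hp', Finset.mul_sum]
    exact Finset.sum_congr rfl fun i _ => by ring
  have hdv : v ⬝ᵥ w = α := by rw [hα']; rfl
  have h2w : ((2 : ℝ) • w) ⬝ᵥ v = 2 * α := by
    rw [hα', Finset.mul_sum]
    simp only [dotProduct, Pi.smul_apply, smul_eq_mul]
    exact Finset.sum_congr rfl fun i _ => by ring
  rw [h4p, hdv, h2w]
  have hs0 : s ≠ 0 := ne_of_gt hs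
  have hn0 : ((n : ℝ) - 1) ≠ 0 := ne_of_gt hn1
  have heq : (n : ℝ) / (4 * ((n : ℝ) - 1)) * (4 * p) / s
      + (s ^ 2 + 2 * α) / ((n : ℝ) - 1) - 2 * F / ((n : ℝ) - 1) * (α / s + s)
      = ((n : ℝ) * p + (s ^ 2 + 2 * α) * s - 2 * F * (α + s ^ 2))
        / (((n : ℝ) - 1) * s) := by
    field_simp
  rw [heq, div_le_iff₀ (by positivity)]
  exact final
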